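/- There exist ε₀ ∈ (0,1) and C > 0 such that for every ε ∈ (0,ε₀) and every real ξ with |ξ| ≥ 2/ε: |M₃(ξ) − sgn(ξ) · (1/ε) · √(1 − √3 i) / (√2 + (√2/2)(1 − √3 i))| ≤ C / (ε³ ξ²). -/

import Mathlib

noncomputable section
open Set

namespace Stmt17

/-- c_ε² = (1 − 2ε² + 2√(1 − ε² + ε⁴)) / (3ε²) -/
def cSq (ε : ℝ) : ℝ := (1 - 2*ε^2 + 2*Real.sqrt (1 - ε^2 + ε^4)) / (3*ε^2)

/-- d_ε² = (−1 + 2ε² + 2√(1 − ε² + ε⁴)) / (3ε²) -/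
def dSq (ε : ℝ) : ℝ := (-1 + 2*ε^2 + 2*Real.sqrt (1 - ε^2 + ε^4)) / (3*ε^2)

/-- for |ξ| > c_ε: D(ξ) = i·√(3ε⁴(ξ² − c_ε²)(ξ² + d_ε²)) -/
def Dbig (ε ξ : ℝ) : ℂ :=
  Complex.I * Complex.ofReal (Real.sqrt (3*ε^4*(ξ^2 - cSq ε)*(ξ^2 + dSq ε)))

/-- W(ξ) = 1 + ε²ξ² − D(ξ) -/
def Wfun (ε ξ : ℝ) : ℂ := Complex.ofReal (1 + ε^2*ξ^2) - Dbig ε ξ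

/-- M₃(ξ) = ξ³ √(W(ξ)) / ( √2 ε² ξ² (1+ξ²) + (√2/2)|ξ|√(1+ξ²) W(ξ) ),
with the principal complex square root. -/
def M3c (ε ξ : ℝ) : ℂ :=
  Complex.ofReal (ξ^3) * (Wfun ε ξ) ^ ((1:ℂ)/2) /
    (Complex.ofReal (Real.sqrt 2 * ε^2 * ξ^2 * (1 + ξ^2))
      + Complex.ofReal (Real.sqrt 2 / 2 * |ξ| * Real.sqrt (1 + ξ^2)) * Wfun ε ξ)


/-! For `ξ > 0` put `u = ε²ξ²`. The factorisation of the quartic turns `D(ξ)` into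
`i √(3u² + (4ε² - 2)u - 1) = i (√3 u + O(1))`, so `W(ξ) = u (1 - √3 i) + O(1)`. Both square roots
`√W` and `εξ √(1 - √3 i)` have real part at least `εξ`, and `a - b = (a² - b²)/(a + b)` gives
`√W = εξ √(1 - √3 i) + O(1/(εξ))`. Likewise the denominator of `M₃` is
`ξ²u (√2 + (√2/2)(1 - √3 i)) + O(ξ²)`, and both denominators have modulus at least `uξ²`, so the two
quotients differ by `O(1/(ε³ξ⁵))`; multiplying by `ξ³` gives the bound. `M₃` is odd in `ξ`, which
handles `ξ < 0`. -/

end Stmt17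

namespace Complex

theorem norm_sub_mul_re_add_le (a b : ℂ) : ‖a - b‖ * (a + b).re ≤ ‖a ^ 2 - b ^ 2‖ := by
  rw [sq_sub_sq, norm_mul, mul_comm ‖a + b‖]
  exact mul_le_mul_of_nonneg_left (re_le_norm _) (norm_nonneg (a - b))

theorem norm_cpow_inv_two_sub_le {z b : ℂ} {r : ℝ} (hr : 0 < r) (hb : r ≤ b.re) :
    ‖z ^ (2⁻¹ : ℂ) - b‖ ≤ ‖z - b ^ 2‖ / r := by
  have hre : r ≤ (z ^ (2⁻¹ : ℂ) + b).re := by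
    rw [add_re, cpow_inv_two_re]
    linarith [Real.sqrt_nonneg ((‖z‖ + z.re) / 2)]
  rw [le_div_iff₀ hr]
  calc ‖z ^ (2⁻¹ : ℂ) - b‖ * r ≤ ‖z ^ (2⁻¹ : ℂ) - b‖ * (z ^ (2⁻¹ : ℂ) + b).re := by gcongr
    _ ≤ ‖z - b ^ 2‖ := by simpa using norm_sub_mul_re_add_le (z ^ (2⁻¹ : ℂ)) b

end Complex

theorem norm_div_sub_div_le {𝕜 : Type*} [NormedField 𝕜] {a b a₀ b₀ : 𝕜} (hb : b ≠ 0)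
    (hb₀ : b₀ ≠ 0) :
    ‖a / b - a₀ / b₀‖ ≤ (‖a - a₀‖ * ‖b₀‖ + ‖a₀‖ * ‖b₀ - b‖) / (‖b‖ * ‖b₀‖) := by
  rw [div_sub_div _ _ hb hb₀, norm_div, norm_mul,
    show a * b₀ - b * a₀ = (a - a₀) * b₀ + a₀ * (b₀ - b) by ring]
  gcongr
  exact (norm_add_le _ _).trans_eq (by rw [norm_mul, norm_mul])

namespace Stmt17

open Complex

def Wlim : ℂ := 1 - (Real.sqrt 3 : ℂ) * I

def denLim : ℂ := (Real.sqrt 2 : ℂ) + ((Real.sqrt 2 / 2 : ℝ) : ℂ) * Wlim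

def M3lim (ε : ℝ) : ℂ := ((1 / ε : ℝ) : ℂ) * Wlim ^ ((1 : ℂ) / 2) / denLim

theorem Wlim_re : Wlim.re = 1 := by simp [Wlim]

theorem norm_Wlim : ‖Wlim‖ = 2 := by
  rw [norm_eq_sqrt_sq_add_sq, Wlim_re, show Wlim.im = -Real.sqrt 3 by simp [Wlim], neg_sq,
    Real.sq_sqrt (by norm_num : (0:ℝ) ≤ 3), show (1:ℝ) ^ 2 + 3 = 2 ^ 2 by norm_num,
    Real.sqrt_sq (by norm_num)]

theorem one_le_re_cpow_inv_two_Wlim : 1 ≤ (Wlim ^ (2⁻¹ : ℂ)).re := by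
  rw [cpow_inv_two_re, norm_Wlim, Wlim_re, Real.le_sqrt (by norm_num) (by norm_num)]
  norm_num

theorem norm_cpow_inv_two_Wlim_le : ‖Wlim ^ (2⁻¹ : ℂ)‖ ≤ 2 := by
  have h : ‖Wlim ^ (2⁻¹ : ℂ)‖ ^ 2 = 2 := by rw [← norm_pow, cpow_ofNat_inv_pow, norm_Wlim]
  nlinarith [norm_nonneg (Wlim ^ (2⁻¹ : ℂ))]

theorem one_le_norm_denLim : 1 ≤ ‖denLim‖ := by
  refine le_trans ?_ (re_le_norm _)
  have : denLim.re = 3 / 2 * Real.sqrt 2 := by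
    simp only [denLim, add_re, ofReal_re, re_ofReal_mul, Wlim_re]
    ring
  rw [this]
  nlinarith [Real.one_lt_sqrt_two]

theorem norm_denLim_le : ‖denLim‖ ≤ 3 := by
  calc ‖denLim‖ ≤ Real.sqrt 2 + Real.sqrt 2 / 2 * 2 := by
        refine (norm_add_le _ _).trans_eq ?_
        rw [norm_mul, norm_Wlim, norm_real, norm_real, Real.norm_of_nonneg (by positivity),
          Real.norm_of_nonneg (by positivity)]
    _ ≤ 3 := by nlinarith [Real.sqrt_le_sqrt (show (2:ℝ) ≤ 9 / 4 by norm_num),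
        show Real.sqrt (9 / 4) = 3 / 2 by rw [Real.sqrt_eq_iff_mul_self_eq] <;> norm_num]

theorem cSq_dSq_factorization {ε : ℝ} (hε : ε ≠ 0) (ξ : ℝ) :
    3 * ε ^ 4 * (ξ ^ 2 - cSq ε) * (ξ ^ 2 + dSq ε)
      = 3 * (ε ^ 2 * ξ ^ 2) ^ 2 + (4 * ε ^ 2 - 2) * (ε ^ 2 * ξ ^ 2) - 1 := by
  have hs : Real.sqrt (1 - ε ^ 2 + ε ^ 4) ^ 2 = 1 - ε ^ 2 + ε ^ 4 :=
    Real.sq_sqrt (by nlinarith [sq_nonneg (1 - ε ^ 2), sq_nonneg ε])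
  unfold cSq dSq
  field_simp
  linear_combination (-4) * hs

theorem abs_sqrt_sub_sqrt_three_mul_le {c u : ℝ} (hc₀ : 0 ≤ c) (hc₁ : c ≤ 1) (hu : 4 ≤ u) :
    |Real.sqrt (3 * u ^ 2 + (4 * c - 2) * u - 1) - Real.sqrt 3 * u| ≤ 5 := by
  set A := Real.sqrt (3 * u ^ 2 + (4 * c - 2) * u - 1)
  have hA : A ^ 2 = 3 * u ^ 2 + (4 * c - 2) * u - 1 := Real.sq_sqrt (by nlinarith)
  have h3 : Real.sqrt 3 ^ 2 = 3 := Real.sq_sqrt (by norm_num)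
  have h3' : 1 ≤ Real.sqrt 3 := Real.one_le_sqrt.mpr (by norm_num)
  have hA₀ : 0 ≤ A := Real.sqrt_nonneg _
  have hprod : (A - Real.sqrt 3 * u) * (A + Real.sqrt 3 * u) = (4 * c - 2) * u - 1 := by
    linear_combination hA - u ^ 2 * h3
  have hsum : u ≤ A + Real.sqrt 3 * u := by nlinarith
  rw [abs_le]
  constructor <;> nlinarith

theorem Wfun_neg (ε ξ : ℝ) : Wfun ε (-ξ) = Wfun ε ξ := by simp [Wfun, Dbig]

theorem Wfun_re (ε ξ : ℝ) : (Wfun ε ξ).re = 1 + ε ^ 2 * ξ ^ 2 := by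
  simp only [Wfun, Dbig, sub_re, ofReal_re, mul_re, I_re, I_im, ofReal_im]
  ring

theorem norm_Wfun_sub_le {ε ξ : ℝ} (hε₀ : 0 < ε) (hε₁ : ε ≤ 1) (hξ : 4 ≤ ε ^ 2 * ξ ^ 2) :
    ‖Wfun ε ξ - (ε ^ 2 * ξ ^ 2 : ℝ) * Wlim‖ ≤ 6 := by
  have hsub : Wfun ε ξ - (ε ^ 2 * ξ ^ 2 : ℝ) * Wlim = 1 - I *
      (Real.sqrt (3 * (ε ^ 2 * ξ ^ 2) ^ 2 + (4 * ε ^ 2 - 2) * (ε ^ 2 * ξ ^ 2) - 1)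
        - Real.sqrt 3 * (ε ^ 2 * ξ ^ 2) : ℝ) := by
    rw [Wfun, Dbig, cSq_dSq_factorization hε₀.ne', Wlim]
    push_cast
    ring
  rw [hsub]
  refine (norm_sub_le _ _).trans ?_
  rw [norm_one, norm_mul, norm_I, one_mul, norm_real, Real.norm_eq_abs]
  linarith [abs_sqrt_sub_sqrt_three_mul_le (sq_nonneg ε) (by nlinarith) hξ]

theorem norm_cpow_inv_two_Wfun_sub_le {ε ξ : ℝ} (hε₀ : 0 < ε) (hε₁ : ε ≤ 1) (hξ : 2 ≤ ε * ξ) :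
    ‖Wfun ε ξ ^ (2⁻¹ : ℂ) - (ε * ξ : ℝ) * Wlim ^ (2⁻¹ : ℂ)‖ ≤ 6 / (ε * ξ) := by
  have hre : ε * ξ ≤ ((ε * ξ : ℝ) * Wlim ^ (2⁻¹ : ℂ)).re := by
    rw [re_ofReal_mul]
    nlinarith [one_le_re_cpow_inv_two_Wlim]
  refine (norm_cpow_inv_two_sub_le (by linarith) hre).trans ?_
  gcongr
  rw [mul_pow, cpow_ofNat_inv_pow, ← ofReal_pow, mul_pow]
  exact norm_Wfun_sub_le hε₀ hε₁ (by nlinarith)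

def M3den (ε ξ : ℝ) : ℂ :=
  ((Real.sqrt 2 * ε ^ 2 * ξ ^ 2 * (1 + ξ ^ 2) : ℝ) : ℂ)
    + ((Real.sqrt 2 / 2 * |ξ| * Real.sqrt (1 + ξ ^ 2) : ℝ) : ℂ) * Wfun ε ξ

theorem M3c_eq (ε ξ : ℝ) :
    M3c ε ξ = (ξ ^ 3 : ℝ) * (Wfun ε ξ ^ (2⁻¹ : ℂ) / M3den ε ξ) := by
  rw [M3c, one_div, mul_div_assoc, M3den]

theorem M3c_neg (ε ξ : ℝ) : M3c ε (-ξ) = -M3c ε ξ := by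
  simp only [M3c_eq, M3den, Wfun_neg, abs_neg, neg_sq, Odd.neg_pow (by decide : Odd 3),
    ofReal_neg, neg_mul]

theorem le_norm_M3den (ε ξ : ℝ) : ε ^ 2 * ξ ^ 2 * ξ ^ 2 ≤ ‖M3den ε ξ‖ := by
  refine le_trans ?_ (re_le_norm _)
  have hre : (M3den ε ξ).re = Real.sqrt 2 * (ε ^ 2 * ξ ^ 2) * (1 + ξ ^ 2)
      + Real.sqrt 2 / 2 * |ξ| * Real.sqrt (1 + ξ ^ 2) * (1 + ε ^ 2 * ξ ^ 2) := by
    simp only [M3den, add_re, re_ofReal_mul, ofReal_re, Wfun_re]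
    ring
  rw [hre]
  have : 0 ≤ Real.sqrt 2 / 2 * |ξ| * Real.sqrt (1 + ξ ^ 2) * (1 + ε ^ 2 * ξ ^ 2) := by positivity
  have : ε ^ 2 * ξ ^ 2 * (1 + ξ ^ 2) ≤ Real.sqrt 2 * (ε ^ 2 * ξ ^ 2 * (1 + ξ ^ 2)) :=
    le_mul_of_one_le_left (by positivity) Real.one_lt_sqrt_two.le
  nlinarith [mul_nonneg (sq_nonneg ε) (sq_nonneg ξ)]

theorem norm_M3den_sub_le {ε ξ : ℝ} (hε₀ : 0 < ε) (hε₁ : ε ≤ 1) (hξ : 2 ≤ ε * ξ) :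
    ‖M3den ε ξ - (ξ ^ 2 * (ε ^ 2 * ξ ^ 2) : ℝ) * denLim‖ ≤ 10 * ξ ^ 2 := by
  set u := ε ^ 2 * ξ ^ 2
  set W := Wfun ε ξ
  have hξ₀ : 0 ≤ ξ := by nlinarith
  have hu : 4 ≤ u := by nlinarith
  have huξ : u ≤ ξ ^ 2 := by nlinarith [sq_nonneg ξ, pow_le_one₀ hε₀.le hε₁ (n := 2)]
  set t := ξ * Real.sqrt (1 + ξ ^ 2)
  have ht : 0 ≤ t - ξ ^ 2 ∧ t - ξ ^ 2 ≤ 1 := by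
    have hs : Real.sqrt (1 + ξ ^ 2) ^ 2 = 1 + ξ ^ 2 := Real.sq_sqrt (by positivity)
    have hξs : ξ ≤ Real.sqrt (1 + ξ ^ 2) := Real.le_sqrt_of_sq_le (by linarith)
    constructor <;> nlinarith [sq_nonneg (ξ - Real.sqrt (1 + ξ ^ 2))]
  have hW : ‖W - (u : ℂ) * Wlim‖ ≤ 6 := norm_Wfun_sub_le hε₀ hε₁ hu
  have hWnorm : ‖W‖ ≤ 2 * u + 6 := by
    have := norm_le_norm_add_norm_sub' W ((u : ℂ) * Wlim)
    rw [norm_mul, norm_Wlim, norm_real, Real.norm_of_nonneg (by positivity)] at this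
    linarith
  have hsplit : M3den ε ξ - (ξ ^ 2 * u : ℝ) * denLim = (Real.sqrt 2 * u : ℝ)
      + (Real.sqrt 2 / 2 : ℝ) * ((t - ξ ^ 2 : ℝ) * W + (ξ ^ 2 : ℝ) * (W - (u : ℂ) * Wlim)) := by
    rw [M3den, denLim, abs_of_nonneg hξ₀]
    simp only [u, t, W]
    push_cast
    ring
  rw [hsplit]
  calc _ ≤ Real.sqrt 2 * u + Real.sqrt 2 / 2 * (1 * (2 * u + 6) + ξ ^ 2 * 6) := by
        refine (norm_add_le _ _).trans (add_le_add (le_of_eq ?_) ?_)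
        · rw [norm_real, Real.norm_of_nonneg (by positivity)]
        rw [norm_mul, norm_real, Real.norm_of_nonneg (by positivity)]
        gcongr
        refine (norm_add_le _ _).trans (add_le_add ?_ ?_) <;>
          rw [norm_mul, norm_real, Real.norm_of_nonneg (by first | exact ht.1 | positivity)] <;>
          gcongr
        exact ht.2
    _ ≤ 10 * ξ ^ 2 := by nlinarith [Real.sqrt_two_lt_three_halves, Real.sqrt_nonneg 2]

theorem norm_M3c_sub_M3lim_le {ε ξ : ℝ} (hε₀ : 0 < ε) (hε₁ : ε ≤ 1) (hξ : 2 ≤ ε * ξ) :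
    ‖M3c ε ξ - M3lim ε‖ ≤ 38 / (ε ^ 3 * ξ ^ 2) := by
  have hξ₀ : 0 < ξ := by nlinarith
  set u := ε ^ 2 * ξ ^ 2
  set a₀ : ℂ := (ε * ξ : ℝ) * Wlim ^ (2⁻¹ : ℂ)
  set b₀ : ℂ := (ξ ^ 2 * u : ℝ) * denLim
  have hdenLim : denLim ≠ 0 := norm_pos_iff.mp (one_pos.trans_le one_le_norm_denLim)
  have hb : M3den ε ξ ≠ 0 :=
    norm_pos_iff.mp ((by positivity : (0:ℝ) < _).trans_le (le_norm_M3den ε ξ))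
  have hb₀ : b₀ ≠ 0 := mul_ne_zero (by norm_cast; positivity) hdenLim
  have hlim : M3lim ε = (ξ ^ 3 : ℝ) * (a₀ / b₀) := by
    have hεc : (ε : ℂ) ≠ 0 := ofReal_ne_zero.mpr hε₀.ne'
    have hξc : (ξ : ℂ) ≠ 0 := ofReal_ne_zero.mpr hξ₀.ne'
    simp only [M3lim, a₀, b₀, u, one_div]
    push_cast
    field_simp
  have ha₀ : ‖a₀‖ ≤ 2 * (ε * ξ) := by
    rw [norm_mul, norm_real, Real.norm_of_nonneg (by positivity), mul_comm]
    gcongr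
    exact norm_cpow_inv_two_Wlim_le
  have hb₀_le : ‖b₀‖ ≤ 3 * (ξ ^ 2 * u) := by
    rw [norm_mul, norm_real, Real.norm_of_nonneg (by positivity), mul_comm]
    gcongr
    exact norm_denLim_le
  have hb₀_ge : ξ ^ 2 * u ≤ ‖b₀‖ := by
    rw [norm_mul, norm_real, Real.norm_of_nonneg (by positivity)]
    exact le_mul_of_one_le_right (by positivity) one_le_norm_denLim
  have hb_ge : u * ξ ^ 2 ≤ ‖M3den ε ξ‖ := le_norm_M3den ε ξ
  have hsqrt := norm_cpow_inv_two_Wfun_sub_le hε₀ hε₁ hξ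
  have hden : ‖b₀ - M3den ε ξ‖ ≤ 10 * ξ ^ 2 := by
    rw [norm_sub_rev]
    exact norm_M3den_sub_le hε₀ hε₁ hξ
  rw [M3c_eq, hlim, ← mul_sub, norm_mul, norm_real, Real.norm_of_nonneg (by positivity)]
  calc ξ ^ 3 * ‖Wfun ε ξ ^ (2⁻¹ : ℂ) / M3den ε ξ - a₀ / b₀‖
      ≤ ξ ^ 3 * ((6 / (ε * ξ) * (3 * (ξ ^ 2 * u)) + 2 * (ε * ξ) * (10 * ξ ^ 2))
          / (u * ξ ^ 2 * (ξ ^ 2 * u))) := by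
        gcongr
        refine (norm_div_sub_div_le hb hb₀).trans ?_
        gcongr
    _ = 38 / (ε ^ 3 * ξ ^ 2) := by
        simp only [u]
        field_simp
        ring

theorem M3_asymptotics_at_infinity :
    ∃ ε₀ ∈ Ioo (0:ℝ) 1, ∃ C > (0:ℝ), ∀ ε ∈ Ioo (0:ℝ) ε₀, ∀ ξ : ℝ, 2/ε ≤ |ξ| →
      ‖M3c ε ξ -
          Complex.ofReal (Real.sign ξ) * Complex.ofReal (1/ε)
            * ((1 - Complex.ofReal (Real.sqrt 3) * Complex.I) ^ ((1:ℂ)/2))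
            / (Complex.ofReal (Real.sqrt 2)
                + Complex.ofReal (Real.sqrt 2 / 2)
                  * (1 - Complex.ofReal (Real.sqrt 3) * Complex.I))‖
        ≤ C / (ε^3 * ξ^2) := by
  refine ⟨1 / 2, by norm_num, 38, by norm_num, ?_⟩
  rintro ε ⟨hε₀, hε₁⟩ ξ hξ
  have hεξ : 2 ≤ ε * |ξ| := by rwa [div_le_iff₀' hε₀] at hξ
  rw [mul_assoc, mul_div_assoc]
  change ‖M3c ε ξ - (Real.sign ξ : ℂ) * M3lim ε‖ ≤ 38 / (ε ^ 3 * ξ ^ 2)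
  rcases lt_trichotomy ξ 0 with hneg | rfl | hpos
  · rw [abs_of_neg hneg] at hεξ
    have h := norm_M3c_sub_M3lim_le hε₀ (by linarith) hεξ
    rw [M3c_neg, neg_sq] at h
    rwa [Real.sign_of_neg hneg, ofReal_neg, ofReal_one, neg_one_mul, sub_neg_eq_add, ← norm_neg,
      neg_add']
  · norm_num at hεξ
  · rw [abs_of_pos hpos] at hεξ
    rw [Real.sign_of_pos hpos, ofReal_one, one_mul]
    exact norm_M3c_sub_M3lim_le hε₀ (by linarith) hεξ

end Stmt17
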